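/- arXiv:1506.07675 — 3 statements merged into one kernel-verified Lean document; each statement's English description precedes it below -/
import Mathlib

section
/- For every finite simple graph G whose complement is transitively orientable, there exist a binary matrix M and a row r of M such that G is isomorphic to the conflict graph G_{M,r}; moreover M can be taken to have 2|E(G)|+1 rows and |V(G)| columns, with r the all-ones row. -/
/-! Common definitions: binary matrices, conflicts, row splits, conflict graphs,
containment, transitive orientations. -/

namespace MPP

variable {α β : Type*}

/-- Columns `i` and `j` of the binary matrix `M` are in conflict. -/
def InConflict (M : α → β → Bool) (i j : β) : Prop :=
  ∃ r r' r'' : α, M r i = true ∧ M r j = true ∧ M r' i = false ∧ M r' j = true ∧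
    M r'' i = true ∧ M r'' j = false

theorem InConflict.symm {M : α → β → Bool} {i j : β} (h : InConflict M i j) :
    InConflict M j i := by
  obtain ⟨r, r', r'', h1, h2, h3, h4, h5, h6⟩ := h
  exact ⟨r, r'', r', h2, h1, h6, h5, h4, h3⟩

theorem InConflict.ne {M : α → β → Bool} {i j : β} (h : InConflict M i j) : i ≠ j := by
  rintro rfl
  obtain ⟨r, r', r'', _, _, h3, h4, _, _⟩ := h
  rw [h3] at h4
  exact Bool.false_ne_true h4

/-- A binary matrix is conflict-free if no two of its columns are in conflict. -/
def ConflictFree (M : α → β → Bool) : Prop := ∀ i j : β, ¬ InConflict M i j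

/-- Column `i` of `M` is contained in column `j`. -/
def Contained (M : α → β → Bool) (i j : β) : Prop :=
  ∀ k : α, M k i = true → M k j = true

instance {α β : Type*} [Fintype α] (M : α → β → Bool) (i j : β) :
    Decidable (Contained M i j) :=
  inferInstanceAs (Decidable (∀ k : α, M k i = true → M k j = true))

/-- The conflict graph of a binary matrix `M`: vertices are all columns,
adjacent iff in conflict. -/
def conflictGraphAll (M : α → β → Bool) : SimpleGraph β where
  Adj i j := InConflict M i j
  symm := ⟨fun _ _ h => h.symm⟩
  loopless := ⟨fun _ h => h.ne rfl⟩

/-- The conflict graph `G_{M,r}`: vertices are the columns with a `1` in row `r`,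
adjacent iff the corresponding columns of `M` are in conflict. -/
def conflictGraph (M : α → β → Bool) (r : α) : SimpleGraph {j : β // M r j = true} where
  Adj a b := InConflict M a.1 b.1
  symm := ⟨fun _ _ h => h.symm⟩
  loopless := ⟨fun _ h => h.ne rfl⟩

/-- `M'` is a row split of `M` via the assignment `f` sending each row of `M'` to the row
of `M` it splits: each row `i` of `M` is the bitwise OR of the rows of `M'` mapped to `i`. -/
def IsRowSplit {α' : Type*} (M : α → β → Bool) (M' : α' → β → Bool) (f : α' → α) : Prop :=
  ∀ (i : α) (j : β), M i j = true ↔ ∃ k : α', f k = i ∧ M' k j = true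

/-- `γ̄(M)`: the minimum number of rows of a conflict-free row split of `M`. -/
noncomputable def gammaBar (M : α → β → Bool) : ℕ :=
  sInf {k : ℕ | ∃ (M' : Fin k → β → Bool) (f : Fin k → α),
    IsRowSplit M M' f ∧ ConflictFree M'}

/-- `η̄(M)`: the minimum number of pairwise distinct rows of a conflict-free row split of `M`. -/
noncomputable def etaBar (M : α → β → Bool) : ℕ :=
  sInf {d : ℕ | ∃ (k : ℕ) (M' : Fin k → β → Bool) (f : Fin k → α),
    IsRowSplit M M' f ∧ ConflictFree M' ∧ Nat.card (Set.range M') = d}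

/-- `o` is a transitive orientation of the graph `G`: it assigns to each edge `{u,v}`
exactly one of `(u,v)`, `(v,u)`, and is transitive. -/
def IsTransitiveOrientation {V : Type*} (G : SimpleGraph V) (o : V → V → Prop) : Prop :=
  (∀ u v, o u v → G.Adj u v) ∧
  (∀ u v, G.Adj u v → (o u v ↔ ¬ o v u)) ∧
  (∀ u v w, o u v → o v w → o u w)

/-- A graph is transitively orientable if it admits a transitive orientation. -/
def TransitivelyOrientable {V : Type*} (G : SimpleGraph V) : Prop :=
  ∃ o : V → V → Prop, IsTransitiveOrientation G o

/-- The undirected containment graph `H_M`: vertices are the columns of `M`, two distinct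
columns adjacent iff one is contained in the other. -/
def containmentGraph (M : α → β → Bool) : SimpleGraph β where
  Adj i j := i ≠ j ∧ (Contained M i j ∨ Contained M j i)
  symm := ⟨fun _ _ h => ⟨h.1.symm, h.2.symm⟩⟩
  loopless := ⟨fun _ h => h.1 rfl⟩

/-- In the directed containment graph `H⃗_{M,r}` (on the columns with a `1` in row `r`,
with an arc from `c_i` to `c_j` iff `i ≠ j` and `c_i` is contained in `c_j`),
the vertex `j` is a source, i.e., has no incoming arc. -/
def IsSourceCol (M : α → β → Bool) (r : α) (j : {c : β // M r c = true}) : Prop :=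
  ∀ i : {c : β // M r c = true}, i ≠ j → ¬ Contained M i.1 j.1

/-- `σ(M,r)`: the number of sources of the directed containment graph `H⃗_{M,r}`. -/
noncomputable def sigmaMr (M : α → β → Bool) (r : α) : ℕ :=
  Nat.card {j : {c : β // M r c = true} // IsSourceCol M r j}

end MPP

/-! A transitive orientation `o` of `Gᶜ` is a strict partial order whose comparable pairs are
exactly the non-edges of `G`. Take one row per dart `(u, v)` of `G`, equal to the up-set of `u`
with `v` removed, plus an all-ones row. Since `v` is incomparable to `u`, every row is still an
up-set, so comparable columns are nested and never in conflict; for an edge `uv` the all-ones row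
and the rows of the darts `(u, v)` and `(v, u)` witness a conflict. -/

namespace MPP

section

variable {α α' β β' : Type*}

theorem not_inConflict_of_contained {M : α → β → Bool} {i j : β} (h : Contained M i j) :
    ¬ InConflict M i j := by
  rintro ⟨-, -, r'', -, -, -, -, hi, hj⟩
  simp [h r'' hi] at hj

theorem inConflict_comp_iff {M : α → β → Bool} {e : α' → α} (he : Function.Surjective e)
    (f : β' → β) {i j : β'} :
    InConflict (fun a b => M (e a) (f b)) i j ↔ InConflict M (f i) (f j) := by
  constructor
  · rintro ⟨r, r', r'', h⟩
    exact ⟨e r, e r', e r'', h⟩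
  · rintro ⟨r, r', r'', h⟩
    obtain ⟨s, rfl⟩ := he r
    obtain ⟨s', rfl⟩ := he r'
    obtain ⟨s'', rfl⟩ := he r''
    exact ⟨s, s', s'', h⟩

def conflictGraphAllReindexIso (M : α → β → Bool) (e : α' ≃ α) (f : β' ≃ β) :
    conflictGraphAll (fun a b => M (e a) (f b)) ≃g conflictGraphAll M where
  toEquiv := f
  map_rel_iff' := (inConflict_comp_iff e.surjective f).symm

def conflictGraphIsoOfAllOnes {M : α → β → Bool} {r : α} (hr : ∀ j, M r j = true) :
    conflictGraph M r ≃g conflictGraphAll M where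
  toEquiv := Equiv.subtypeUnivEquiv hr
  map_rel_iff' := Iff.rfl

end

section DartMatrix

variable {V : Type*} {G : SimpleGraph V} {o : V → V → Prop}

open Classical in
noncomputable def dartMatrix (G : SimpleGraph V) (o : V → V → Prop) : Option G.Dart → V → Bool
  | none, _ => true
  | some d, c => decide (c ≠ d.snd ∧ (c = d.fst ∨ o d.fst c))

theorem IsTransitiveOrientation.not_adj {u v : V} (ho : IsTransitiveOrientation Gᶜ o)
    (huv : o u v) : ¬ G.Adj u v :=
  ((SimpleGraph.compl_adj G u v).1 (ho.1 u v huv)).2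

theorem IsTransitiveOrientation.contained_dartMatrix {u v : V}
    (ho : IsTransitiveOrientation Gᶜ o) (huv : o u v) : Contained (dartMatrix G o) u v := by
  rintro (_ | d) hu
  · rfl
  simp only [dartMatrix, decide_eq_true_eq] at hu ⊢
  obtain ⟨-, hu⟩ := hu
  have hdv : o d.fst v := hu.elim (· ▸ huv) (ho.2.2 _ _ _ · huv)
  refine ⟨?_, Or.inr hdv⟩
  rintro rfl
  exact ho.not_adj hdv d.adj

theorem IsTransitiveOrientation.inConflict_dartMatrix_iff {u v : V}
    (ho : IsTransitiveOrientation Gᶜ o) : InConflict (dartMatrix G o) u v ↔ G.Adj u v := by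
  constructor
  · intro hc
    by_contra hnadj
    have hcompl : Gᶜ.Adj u v := (SimpleGraph.compl_adj G u v).2 ⟨hc.ne, hnadj⟩
    by_cases huv : o u v
    · exact not_inConflict_of_contained (ho.contained_dartMatrix huv) hc
    · have hvu : o v u := (ho.2.1 v u hcompl.symm).2 huv
      exact not_inConflict_of_contained (ho.contained_dartMatrix hvu) hc.symm
  · intro hadj
    refine ⟨none, some ⟨(v, u), hadj.symm⟩, some ⟨(u, v), hadj⟩, ?_⟩
    simp [dartMatrix, hadj.ne, hadj.ne.symm]

def IsTransitiveOrientation.conflictGraphAllDartMatrixIso (ho : IsTransitiveOrientation Gᶜ o) :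
    conflictGraphAll (dartMatrix G o) ≃g G where
  toEquiv := Equiv.refl V
  map_rel_iff' := ho.inConflict_dartMatrix_iff.symm

end DartMatrix

theorem stmt_4_general {V : Type*} [Fintype V] (G : SimpleGraph V)
    [DecidableRel G.Adj] (h : TransitivelyOrientable Gᶜ) :
    ∃ (M : Fin (2 * G.edgeFinset.card + 1) → Fin (Fintype.card V) → Bool)
      (r : Fin (2 * G.edgeFinset.card + 1)),
      (∀ j, M r j = true) ∧ Nonempty (G ≃g conflictGraph M r) := by
  obtain ⟨o, ho⟩ := h
  have hrows : Fintype.card (Fin (2 * G.edgeFinset.card + 1)) = Fintype.card (Option G.Dart) := by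
    simp [SimpleGraph.dart_card_eq_twice_card_edges]
  let ρ := Fintype.equivOfCardEq hrows
  let ε := (Fintype.equivFin V).symm
  let M := fun i j => dartMatrix G o (ρ i) (ε j)
  have hall : ∀ j, M (ρ.symm none) j = true := fun j => by simp [M, dartMatrix]
  exact ⟨M, ρ.symm none, hall, ⟨((conflictGraphIsoOfAllOnes hall).trans
    ((conflictGraphAllReindexIso (dartMatrix G o) ρ ε).trans ho.conflictGraphAllDartMatrixIso)).symm⟩⟩

/-- If the complement of a finite simple graph `G` is transitively orientable, then `G` is
isomorphic to the conflict graph `G_{M,r}` for some binary matrix `M` with `2|E(G)|+1` rows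
and `|V(G)|` columns, where `r` is an all-ones row of `M`. -/
theorem stmt_4 {V : Type*} [Fintype V] [DecidableEq V] (G : SimpleGraph V)
    [DecidableRel G.Adj] (h : TransitivelyOrientable Gᶜ) :
    ∃ (M : Fin (2 * G.edgeFinset.card + 1) → Fin (Fintype.card V) → Bool)
      (r : Fin (2 * G.edgeFinset.card + 1)),
      (∀ j, M r j = true) ∧ Nonempty (G ≃g conflictGraph M r) :=
  stmt_4_general G h

end MPP
end

section
/- Let M be an m×n binary matrix with no all-zero row, with pairwise distinct columns, and such that no column of M is contained in both columns of a pair of conflicting columns. Then γ̄(M) = Σ_r χ(G_{M,r}) = Σ_r σ(M,r), where both sums run over all rows r of M. -/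
/-!
Call a column with a `1` in row `r` a source of row `r` if no other column with a `1` in
row `r` is contained in it. Two sources of the same row are never comparable, hence conflict;
and since the columns are distinct, every column with a `1` in row `r` contains a source of
row `r`. Consequently the sources of row `r` form a clique of `G_{M,r}`, while colouring each
column by a source it contains is proper: two conflicting columns sharing a source would both
contain it. So `χ(G_{M,r}) = σ(M,r)`.

For `γ̄`, a conflict-free row split never puts two conflicting columns of `M` in one row (they
would be comparable in the split, hence in `M`), so the sources of each row `r` need pairwise different rows among those splitting `r`,
giving `γ̄(M) ≥ Σ_r σ(M,r)`. Conversely, splitting row `r` into one row per source `a`, namely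
the set of columns containing `a`, is a conflict-free row split with exactly `Σ_r σ(M,r)` rows.
-/

namespace MPP

open Finset SimpleGraph

variable {α β : Type*} {M : α → β → Bool}

theorem Contained.trans {a b c : β} (hab : Contained M a b) (hbc : Contained M b c) :
    Contained M a c :=
  fun k hk => hbc k (hab k hk)

theorem InConflict.not_contained {i j : β} (h : InConflict M i j) : ¬ Contained M i j := by
  obtain ⟨-, -, r, -, -, -, -, hi, hj⟩ := h
  intro hij
  simp [hij r hi] at hj

theorem contained_or_contained_of_not_inConflict {i j : β} {k : α} (h : ¬ InConflict M i j)
    (hi : M k i = true) (hj : M k j = true) : Contained M i j ∨ Contained M j i := by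
  by_contra! hcon
  simp only [Contained, not_forall, Bool.not_eq_true, exists_prop] at hcon
  obtain ⟨⟨p, hpi, hpj⟩, ⟨q, hqj, hqi⟩⟩ := hcon
  exact h ⟨k, q, p, hi, hj, hqi, hqj, hpi, hpj⟩

theorem IsSourceCol.inConflict {r : α} {a b : {c : β // M r c = true}}
    (ha : IsSourceCol M r a) (hb : IsSourceCol M r b) (hne : a ≠ b) :
    InConflict M a.1 b.1 := by
  by_contra h
  rcases contained_or_contained_of_not_inConflict h a.2 b.2 with hab | hba
  · exact hb a hne hab
  · exact ha b hne.symm hba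

section RowSplit

variable {ι : Type*} {M' : ι → β → Bool} {f : ι → α}

theorem IsRowSplit.contained (h : IsRowSplit M M' f) {c d : β} (hcd : Contained M' c d) :
    Contained M c d := by
  intro k hk
  obtain ⟨k', rfl, hk'⟩ := (h k c).mp hk
  exact (h _ d).mpr ⟨k', rfl, hcd k' hk'⟩

theorem IsRowSplit.not_inConflict_of_mem_row (h : IsRowSplit M M' f) (hcf : ConflictFree M')
    {k : ι} {c d : β} (hc : M' k c = true) (hd : M' k d = true) : ¬ InConflict M c d := by
  intro hcd
  rcases contained_or_contained_of_not_inConflict (hcf c d) hc hd with hc' | hd'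
  · exact hcd.not_contained (h.contained hc')
  · exact hcd.symm.not_contained (h.contained hd')

theorem IsRowSplit.exists_fin [Finite ι] (h : IsRowSplit M M' f) (hcf : ConflictFree M') :
    ∃ (N : Fin (Nat.card ι) → β → Bool) (g : Fin (Nat.card ι) → α),
      IsRowSplit M N g ∧ ConflictFree N := by
  let e := Finite.equivFin ι
  refine ⟨M' ∘ e.symm, f ∘ e.symm, fun i j => (h i j).trans e.exists_congr_left,
    fun c d hcd => ?_⟩
  obtain ⟨p, p', p'', hcd⟩ := hcd
  exact hcf c d ⟨e.symm p, e.symm p', e.symm p'', hcd⟩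

theorem sum_sigmaMr_le_card [Fintype α] [Finite β] [Finite ι] (h : IsRowSplit M M' f)
    (hcf : ConflictFree M') : ∑ r, sigmaMr M r ≤ Nat.card ι := by
  choose φ hφr hφ using
    fun p : Σ r, {a : {c : β // M r c = true} // IsSourceCol M r a} => (h p.1 p.2.1.1).mp p.2.1.2
  have hφinj : φ.Injective := by
    rintro ⟨r, a, ha⟩ ⟨r', b, hb⟩ hab
    obtain rfl : r = r' := by simpa only [hφr] using congrArg f hab
    by_contra hne
    have hab' : a ≠ b := by rintro rfl; exact hne rfl
    exact h.not_inConflict_of_mem_row hcf (hφ ⟨r, a, ha⟩) (hab ▸ hφ ⟨r, b, hb⟩)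
      (ha.inConflict hb hab')
  simpa only [sigmaMr, Nat.card_sigma] using Nat.card_le_card_of_injective φ hφinj

end RowSplit

section Sources

variable [Fintype α]

theorem card_filter_lt_of_contained (hinj : Function.Injective fun j k => M k j) {i j : β}
    (hij : Contained M i j) (hne : i ≠ j) : #{k | M k i = true} < #{k | M k j = true} := by
  refine card_lt_card ⟨fun k hk => ?_, fun hji => hne (hinj (funext fun k => ?_))⟩
  · simp only [mem_filter, mem_univ, true_and] at hk ⊢
    exact hij k hk
  · refine Bool.eq_iff_iff.mpr ⟨hij k, fun hk => ?_⟩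
    simpa using hji (by simpa using hk)

theorem exists_isSourceCol_contained (hinj : Function.Injective fun j k => M k j) (r : α)
    (x : {c : β // M r c = true}) : ∃ a, IsSourceCol M r a ∧ Contained M a.1 x.1 := by
  obtain ⟨a, hax, hmin⟩ :=
    (measure fun a : {c : β // M r c = true} => #{k | M k a.1 = true}).wf.has_min
      {a | Contained M a.1 x.1} ⟨x, fun _ => id⟩
  exact ⟨a, fun i hne hia => hmin i (hia.trans hax)
    (card_filter_lt_of_contained hinj hia (Subtype.coe_ne_coe.mpr hne)), hax⟩

theorem chromaticNumber_conflictGraph [Finite β] (hinj : Function.Injective fun j k => M k j)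
    (hnc : ∀ c i j : β, InConflict M i j → ¬ (Contained M c i ∧ Contained M c j)) (r : α) :
    (conflictGraph M r).chromaticNumber = sigmaMr M r := by
  refine le_antisymm ?_ <| le_chromaticNumber_of_pairwise_adj le_rfl
    (Subtype.val : {a // IsSourceCol M r a} → _) fun a b hne => a.2.inConflict b.2 ?_
  · choose src hsrc hcont using exists_isSourceCol_contained hinj r
    have := Fintype.ofFinite {a // IsSourceCol M r a}
    let C : (conflictGraph M r).Coloring {a // IsSourceCol M r a} :=
      Coloring.mk (fun x => ⟨src x, hsrc x⟩) fun {x y} hxy hsame =>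
        hnc _ _ _ hxy ⟨hcont x, Subtype.mk.inj hsame ▸ hcont y⟩
    simpa only [sigmaMr, Nat.card_eq_fintype_card] using C.colorable.chromaticNumber_le
  · exact Subtype.coe_ne_coe.mpr hne

variable (M) in
def sourceSplit : (Σ r, {a : {c : β // M r c = true} // IsSourceCol M r a}) → β → Bool :=
  fun p c => decide (Contained M p.2.1.1 c)

theorem isRowSplit_sourceSplit (hinj : Function.Injective fun j k => M k j) :
    IsRowSplit M (sourceSplit M) Sigma.fst := by
  intro r c
  simp only [sourceSplit, decide_eq_true_eq]
  constructor
  · intro hc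
    obtain ⟨a, ha, hac⟩ := exists_isSourceCol_contained hinj r ⟨c, hc⟩
    exact ⟨⟨r, a, ha⟩, rfl, hac⟩
  · rintro ⟨p, rfl, hac⟩
    exact hac _ p.2.1.2

theorem conflictFree_sourceSplit
    (hnc : ∀ c i j : β, InConflict M i j → ¬ (Contained M c i ∧ Contained M c j)) :
    ConflictFree (sourceSplit M) := by
  rintro c d ⟨p, p', p'', hpc, hpd, hp'c, hp'd, hp''c, hp''d⟩
  simp only [sourceSplit, decide_eq_true_eq, decide_eq_false_iff_not]
    at hpc hpd hp'c hp'd hp''c hp''d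
  have hcd : ¬ InConflict M c d := fun h => hnc _ c d h ⟨hpc, hpd⟩
  rcases contained_or_contained_of_not_inConflict hcd (hpc _ p.2.1.2) (hpd _ p.2.1.2) with h | h
  · exact hp''d (hp''c.trans h)
  · exact hp'c (hp'd.trans h)

theorem gammaBar_eq_sum_sigmaMr [Finite β] (hinj : Function.Injective fun j k => M k j)
    (hnc : ∀ c i j : β, InConflict M i j → ¬ (Contained M c i ∧ Contained M c j)) :
    gammaBar M = ∑ r, sigmaMr M r := by
  have hsplit := (isRowSplit_sourceSplit hinj).exists_fin (conflictFree_sourceSplit hnc)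
  rw [Nat.card_sigma] at hsplit
  refine le_antisymm (Nat.sInf_le hsplit) ?_
  obtain ⟨N, g, hN, hcf⟩ : gammaBar M ∈ _ := Nat.sInf_mem ⟨_, hsplit⟩
  simpa using sum_sigmaMr_le_card hN hcf

end Sources

theorem stmt_8_general {m n : ℕ} (M : Fin m → Fin n → Bool)
    (hinj : Function.Injective fun j : Fin n => fun k : Fin m => M k j)
    (hnc : ∀ c i j : Fin n, InConflict M i j → ¬ (Contained M c i ∧ Contained M c j)) :
    (gammaBar M : ℕ∞) = ∑ r : Fin m, (conflictGraph M r).chromaticNumber ∧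
    gammaBar M = ∑ r : Fin m, sigmaMr M r := by
  have hγ := gammaBar_eq_sum_sigmaMr hinj hnc
  refine ⟨?_, hγ⟩
  rw [hγ, Nat.cast_sum]
  exact Finset.sum_congr rfl fun r _ => (chromaticNumber_conflictGraph hinj hnc r).symm

/-- Theorem 5: if `M` has no all-zero row, has pairwise distinct columns, and no column of `M`
is contained in both columns of a pair of conflicting columns, then
`γ̄(M) = Σ_r χ(G_{M,r}) = Σ_r σ(M,r)`. -/
theorem stmt_8 {m n : ℕ} (M : Fin m → Fin n → Bool)
    (hrow : ∀ r : Fin m, ∃ j, M r j = true)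
    (hinj : Function.Injective fun j : Fin n => fun k : Fin m => M k j)
    (hnc : ∀ c i j : Fin n, InConflict M i j → ¬ (Contained M c i ∧ Contained M c j)) :
    (gammaBar M : ℕ∞) = ∑ r : Fin m, (conflictGraph M r).chromaticNumber ∧
    gammaBar M = ∑ r : Fin m, sigmaMr M r :=
  stmt_8_general M hinj hnc

end MPP
end

section
/- Let G = (V,E) be a simple cubic graph whose edge set is partitioned into three matchings E = E_1 ∪ E_2 ∪ E_3, and let M = M(G) be the (|V|+3)×(|E|+3) binary matrix associated with G. Define M' by keeping the three rows of M indexed by r_1,r_2,r_3 unchanged and replacing each row indexed by a vertex v ∈ V (with incident edges e_1,e_2,e_3 labeled so that e_i ∈ E_i) by three rows v^1,v^2,v^3, where M'_{v^i,c} = 1 if and only if c = e_i or c = c_i. Then M' is a conflict-free row split of M with 3|V|+3 rows; in particular γ̄(M(G)) ≤ 3|V|+3. -/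
namespace MPP

/-- A set of edges is a matching if its elements are pairwise disjoint. -/
def IsMatchingSet {V : Type*} (s : Set (Sym2 V)) : Prop :=
  ∀ e ∈ s, ∀ f ∈ s, e ≠ f → ∀ v : V, ¬ (v ∈ e ∧ v ∈ f)

/-- A graph is 3-edge-colorable if its edge set can be partitioned into three matchings. -/
def ThreeEdgeColorable {V : Type*} (G : SimpleGraph V) : Prop :=
  ∃ E₁ E₂ E₃ : Set (Sym2 V), E₁ ∪ E₂ ∪ E₃ = G.edgeSet ∧
    Disjoint E₁ E₂ ∧ Disjoint E₁ E₃ ∧ Disjoint E₂ E₃ ∧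
    IsMatchingSet E₁ ∧ IsMatchingSet E₂ ∧ IsMatchingSet E₃

/-- The `(|V|+3) × (|E|+3)` binary matrix `M(G)` associated with a graph `G`, with rows indexed
by `V ∪ {r₁,r₂,r₃}` and columns indexed by `E ∪ {c₁,c₂,c₃}`. -/
def Mcubic {V : Type*} [DecidableEq V] (G : SimpleGraph V) :
    (V ⊕ Fin 3) → (↥G.edgeSet ⊕ Fin 3) → Bool
  | Sum.inl v, Sum.inl e => decide (v ∈ (e : Sym2 V))
  | Sum.inl _, Sum.inr _ => true
  | Sum.inr _, Sum.inl _ => false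
  | Sum.inr i, Sum.inr j => decide (i = j)

end MPP

namespace MPP

/-- The split matrix built from a proper 3-edge-coloring: rows `r₁,r₂,r₃` of `M(G)` are kept,
and each vertex row `v` is replaced by rows `v¹,v²,v³` with `M'_{vⁱ,c} = 1` iff `c = εᵥᵢ`
(the edge at `v` of color `i`) or `c = cᵢ`. -/
def splitCubic {V : Type*} [DecidableEq V] (G : SimpleGraph V)
    (ε : V → Fin 3 → ↥G.edgeSet) :
    ((V × Fin 3) ⊕ Fin 3) → (↥G.edgeSet ⊕ Fin 3) → Bool
  | Sum.inl (v, i), Sum.inl e => decide (e = ε v i)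
  | Sum.inl (_, i), Sum.inr j => decide (i = j)
  | Sum.inr i, c => Mcubic G (Sum.inr i) c

/-! Each split row `vⁱ` has exactly two ones, in the column of the edge of colour `i` at `v`
and in `cᵢ`. So two edge columns, or two colour columns, never share a row, while an edge
column is contained in the column of its colour: any two columns meeting in a row are nested,
which rules out conflicts. -/

section RowSplit

variable {α α' γ β : Type*}

theorem conflictFree_of_nested {M : α → β → Bool}
    (h : ∀ r i j, M r i = true → M r j = true → Contained M i j ∨ Contained M j i) :
    ConflictFree M := by
  rintro i j ⟨r, r', r'', hri, hrj, hr'i, hr'j, hr''i, hr''j⟩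
  rcases h r i j hri hrj with hij | hji
  · simpa [hr''j] using hij r'' hr''i
  · simpa [hr'i] using hji r' hr'j

theorem ConflictFree.comp {M : α → β → Bool} (hM : ConflictFree M) (g : γ → α) :
    ConflictFree (fun k => M (g k)) := by
  rintro i j ⟨r, r', r'', h⟩
  exact hM i j ⟨g r, g r', g r'', h⟩

theorem IsRowSplit.comp_equiv {M : α → β → Bool} {M' : α' → β → Bool} {f : α' → α}
    (h : IsRowSplit M M' f) (e : γ ≃ α') :
    IsRowSplit M (fun k => M' (e k)) (fun k => f (e k)) :=
  fun i j => (h i j).trans e.exists_congr_right.symm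

theorem gammaBar_le_card [Fintype α'] {M : α → β → Bool} {M' : α' → β → Bool} {f : α' → α}
    (h : IsRowSplit M M' f) (hM' : ConflictFree M') : gammaBar M ≤ Fintype.card α' := by
  let e := (Fintype.equivFin α').symm
  exact Nat.sInf_le ⟨_, _, h.comp_equiv e, hM'.comp e⟩

end RowSplit

theorem IsMatchingSet.eq_of_mem {V : Type*} {s : Set (Sym2 V)} (hs : IsMatchingSet s)
    {e f : Sym2 V} (he : e ∈ s) (hf : f ∈ s) {v : V} (hve : v ∈ e) (hvf : v ∈ f) : e = f :=
  by_contra fun hne => hs e he f hf hne v ⟨hve, hvf⟩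

section splitCubic

variable {V : Type*} [DecidableEq V] {G : SimpleGraph V} {ε : V → Fin 3 → ↥G.edgeSet}

theorem splitCubic_edge_contained_color (hcol : ∀ v k w l, ε v k = ε w l → k = l)
    {r : (V × Fin 3) ⊕ Fin 3} {e : ↥G.edgeSet} {c : Fin 3}
    (hre : splitCubic G ε r (.inl e) = true) (hrc : splitCubic G ε r (.inr c) = true) :
    Contained (splitCubic G ε) (.inl e) (.inr c) := by
  intro r' hr'
  rcases r with ⟨v, k⟩ | _
  · rcases r' with ⟨w, l⟩ | _
    · have hk : k = c := by simpa [splitCubic] using hrc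
      have hv : e = ε v k := by simpa [splitCubic] using hre
      have hw : e = ε w l := by simpa [splitCubic] using hr'
      simpa [splitCubic, ← hk] using hcol w l v k (hw.symm.trans hv)
    · simp [splitCubic, Mcubic] at hr'
  · simp [splitCubic, Mcubic] at hre

theorem conflictFree_splitCubic (hcol : ∀ v k w l, ε v k = ε w l → k = l) :
    ConflictFree (splitCubic G ε) := by
  refine conflictFree_of_nested fun r i j hri hrj => ?_
  rcases i with e | c <;> rcases j with f | d
  · obtain rfl : e = f := by
      rcases r with ⟨v, k⟩ | _ <;> simp_all [splitCubic, Mcubic]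
    exact .inl fun _ h => h
  · exact .inl (splitCubic_edge_contained_color hcol hri hrj)
  · exact .inr (splitCubic_edge_contained_color hcol hrj hri)
  · obtain rfl : c = d := by
      rcases r with ⟨v, k⟩ | _ <;> simp_all [splitCubic, Mcubic]
    exact .inl fun _ h => h

theorem isRowSplit_splitCubic (hmem : ∀ v i, v ∈ (ε v i : Sym2 V))
    (hsurj : ∀ v (e : ↥G.edgeSet), v ∈ (e : Sym2 V) → ∃ i, ε v i = e) :
    IsRowSplit (Mcubic G) (splitCubic G ε) (Sum.map Prod.fst id) := by
  rintro (v | m) j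
  · rcases j with e | c
    · constructor
      · intro hv
        obtain ⟨i, rfl⟩ := hsurj v e (by simpa [Mcubic] using hv)
        exact ⟨.inl (v, i), rfl, by simp [splitCubic]⟩
      · rintro ⟨⟨w, i⟩ | _, hw, he⟩
        · obtain rfl : w = v := by simpa using hw
          obtain rfl : e = ε w i := by simpa [splitCubic] using he
          simpa [Mcubic] using hmem w i
        · simp at hw
    · exact iff_of_true rfl ⟨.inl (v, c), rfl, by simp [splitCubic]⟩
  · refine ⟨fun h => ⟨.inr m, rfl, h⟩, ?_⟩
    rintro ⟨_ | m', hm, h⟩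
    · simp at hm
    · obtain rfl : m' = m := by simpa using hm
      exact h

end splitCubic

theorem stmt_14_general {V : Type*} [Fintype V] [DecidableEq V] (G : SimpleGraph V)
    (E : Fin 3 → Set (Sym2 V))
    (hcover : E 0 ∪ E 1 ∪ E 2 = G.edgeSet)
    (hdisj : ∀ i j : Fin 3, i ≠ j → Disjoint (E i) (E j))
    (hmatch : ∀ i : Fin 3, IsMatchingSet (E i))
    (ε : V → Fin 3 → ↥G.edgeSet)
    (hε : ∀ (v : V) (i : Fin 3), v ∈ (ε v i : Sym2 V) ∧ (ε v i : Sym2 V) ∈ E i) :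
    ConflictFree (splitCubic G ε) ∧
    IsRowSplit (Mcubic G) (splitCubic G ε) (Sum.map Prod.fst id) ∧
    Nat.card ((V × Fin 3) ⊕ Fin 3) = 3 * Fintype.card V + 3 ∧
    gammaBar (Mcubic G) ≤ 3 * Fintype.card V + 3 := by
  have hcol : ∀ v k w l, ε v k = ε w l → k = l := by
    intro v k w l h
    by_contra hkl
    exact Set.disjoint_left.mp (hdisj k l hkl) (hε v k).2 (by rw [h]; exact (hε w l).2)
  have hsurj : ∀ v (e : ↥G.edgeSet), v ∈ (e : Sym2 V) → ∃ i, ε v i = e := by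
    intro v e hv
    obtain ⟨i, hi⟩ : ∃ i, (e : Sym2 V) ∈ E i := by
      have he : (e : Sym2 V) ∈ E 0 ∪ E 1 ∪ E 2 := by rw [hcover]; exact e.2
      rcases he with (h | h) | h
      exacts [⟨0, h⟩, ⟨1, h⟩, ⟨2, h⟩]
    exact ⟨i, Subtype.ext ((hmatch i).eq_of_mem (hε v i).2 hi (hε v i).1 hv)⟩
  have hCF := conflictFree_splitCubic hcol
  have hRS := isRowSplit_splitCubic (fun v i => (hε v i).1) hsurj
  have hcard : Fintype.card ((V × Fin 3) ⊕ Fin 3) = 3 * Fintype.card V + 3 := by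
    simp [mul_comm]
  exact ⟨hCF, hRS, Nat.card_eq_fintype_card.trans hcard,
    (gammaBar_le_card hRS hCF).trans_eq hcard⟩

/-- If the edge set of a simple cubic graph `G` is partitioned into three matchings
`E 0, E 1, E 2`, with `ε v i` the edge of `E i` incident with `v`, then the matrix `splitCubic`
is a conflict-free row split of `M(G)` with `3|V|+3` rows; in particular
`γ̄(M(G)) ≤ 3|V|+3`. -/
theorem stmt_14 {V : Type*} [Fintype V] [DecidableEq V] (G : SimpleGraph V)
    [DecidableRel G.Adj] (hcubic : ∀ v : V, G.degree v = 3)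
    (E : Fin 3 → Set (Sym2 V))
    (hcover : E 0 ∪ E 1 ∪ E 2 = G.edgeSet)
    (hdisj : ∀ i j : Fin 3, i ≠ j → Disjoint (E i) (E j))
    (hmatch : ∀ i : Fin 3, IsMatchingSet (E i))
    (ε : V → Fin 3 → ↥G.edgeSet)
    (hε : ∀ (v : V) (i : Fin 3), v ∈ (ε v i : Sym2 V) ∧ (ε v i : Sym2 V) ∈ E i) :
    ConflictFree (splitCubic G ε) ∧
    IsRowSplit (Mcubic G) (splitCubic G ε) (Sum.map Prod.fst id) ∧
    Nat.card ((V × Fin 3) ⊕ Fin 3) = 3 * Fintype.card V + 3 ∧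
    gammaBar (Mcubic G) ≤ 3 * Fintype.card V + 3 :=
  stmt_14_general G E hcover hdisj hmatch ε hε

end MPP
end
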